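/- If Σ = (G, σ) is a 2-connected balanced signed graph, then its n-th power signed graph Σ^n = (G^n, σ′) is distance-compatible. -/

import Mathlib

open SimpleGraph Polynomial

variable {V : Type*}

/-- The sign of a walk: the product of the signs of its edges. -/
def walkSign {G : SimpleGraph V} (sg : V → V → ℤ) {u v : V} (p : G.Walk u v) : ℤ :=
  (p.darts.map fun d => sg d.toProd.1 d.toProd.2).prod

/-- `sigmaMax G sg u v`: the maximum sign over all shortest `u`–`v` paths. -/
noncomputable def sigmaMax (G : SimpleGraph V) (sg : V → V → ℤ) (u v : V) : ℤ := by
  classical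
  exact if ∃ p : G.Walk u v, p.length = G.dist u v ∧ walkSign sg p = 1 then 1 else -1

/-- `sigmaMin G sg u v`: the minimum sign over all shortest `u`–`v` paths. -/
noncomputable def sigmaMin (G : SimpleGraph V) (sg : V → V → ℤ) (u v : V) : ℤ := by
  classical
  exact if ∃ p : G.Walk u v, p.length = G.dist u v ∧ walkSign sg p = -1 then -1 else 1

/-- `u` and `v` are distance-compatible: all shortest `u`–`v` paths have the same sign. -/
def pairCompatible (G : SimpleGraph V) (sg : V → V → ℤ) (u v : V) : Prop :=
  ∀ p q : G.Walk u v, p.length = G.dist u v → q.length = G.dist u v →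
    walkSign sg p = walkSign sg q

/-- The `n`-th power graph: `u ~ v` iff `u ≠ v` and `d(u,v) ≤ n`. -/
def powerGraph (G : SimpleGraph V) (n : ℕ) : SimpleGraph V where
  Adj u v := u ≠ v ∧ G.dist u v ≤ n
  symm := by
    constructor
    intro u v h
    exact ⟨h.1.symm, by rw [SimpleGraph.dist_comm]; exact h.2⟩
  loopless := by
    constructor
    intro u h
    exact h.1 rfl

/-- A signed graph is balanced if every cycle has positive sign. -/
def SBalanced (G : SimpleGraph V) (sg : V → V → ℤ) : Prop :=
  ∀ ⦃u : V⦄ (p : G.Walk u u), p.IsCycle → walkSign sg p = 1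

/-- 2-connectedness: at least 3 vertices and deleting any vertex leaves a connected graph. -/
def TwoConnected [Fintype V] (G : SimpleGraph V) : Prop :=
  3 ≤ Fintype.card V ∧ ∀ v : V, ((⊤ : G.Subgraph).deleteVerts {v}).coe.Connected

/-- Signature of the associated signed complete graph `K^{D^max}(Σ)`:
edges of `G` keep their sign, non-adjacent pairs get `sigmaMax`. -/
noncomputable def kSigMax (G : SimpleGraph V) (sg : V → V → ℤ) (u v : V) : ℤ := by
  classical
  exact if G.Adj u v then sg u v else sigmaMax G sg u v

/-- Signature of the associated signed complete graph `K^{D^min}(Σ)`. -/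
noncomputable def kSigMin (G : SimpleGraph V) (sg : V → V → ℤ) (u v : V) : ℤ := by
  classical
  exact if G.Adj u v then sg u v else sigmaMin G sg u v

/-!
In a balanced signed graph every closed walk has positive sign: a closed walk is either a cycle,
an edge traversed back and forth, or splits into two shorter closed walks. Hence all `u`–`v` walks
have the same sign `τ(u, v)`, which is in particular the common sign of the shortest ones, and
`τ(u, w) τ(w, v) = τ(u, v)`. So the sign of a walk in `Σ^n` telescopes to `τ(u, v)`, whatever its
length.
-/

open Walk

namespace SimpleGraph.Walk

variable {G : SimpleGraph V}

theorem exists_eq_append_closed_of_not_isPath {u v : V} (p : G.Walk u v) (hp : ¬p.IsPath) :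
    ∃ (w : V) (p₁ : G.Walk u w) (c : G.Walk w w) (p₂ : G.Walk w v),
      ¬c.Nil ∧ p = p₁.append (c.append p₂) := by
  classical
  induction p with
  | nil => exact absurd IsPath.nil hp
  | @cons u x v h p ih =>
    by_cases hpath : p.IsPath
    · have hu : u ∈ p.support := by simpa [cons_isPath_iff, hpath] using hp
      exact ⟨u, nil, cons h (p.takeUntil u hu), p.dropUntil u hu, not_nil_cons, by simp⟩
    · obtain ⟨w, p₁, c, p₂, hc, rfl⟩ := ih hpath
      exact ⟨w, cons h p₁, c, p₂, hc, rfl⟩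

end SimpleGraph.Walk

section WalkSign

variable {G : SimpleGraph V} (sg : V → V → ℤ)

@[simp]
theorem walkSign_nil {u : V} : walkSign sg (nil : G.Walk u u) = 1 := rfl

@[simp]
theorem walkSign_cons {u v w : V} (h : G.Adj u v) (p : G.Walk v w) :
    walkSign sg (cons h p) = sg u v * walkSign sg p := by
  simp [walkSign]

@[simp]
theorem walkSign_append {u v w : V} (p : G.Walk u v) (q : G.Walk v w) :
    walkSign sg (p.append q) = walkSign sg p * walkSign sg q := by
  simp [walkSign]

variable {sg}

theorem walkSign_reverse (hsym : ∀ a b, sg a b = sg b a) {u v : V} (p : G.Walk u v) :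
    walkSign sg p.reverse = walkSign sg p := by
  induction p with
  | nil => rfl
  | cons h p ih => simp [ih, hsym, mul_comm]

theorem walkSign_mul_self (hval : ∀ a b, G.Adj a b → sg a b = 1 ∨ sg a b = -1) {u v : V}
    (p : G.Walk u v) : walkSign sg p * walkSign sg p = 1 := by
  induction p with
  | nil => rfl
  | cons h p ih =>
    rw [walkSign_cons, mul_mul_mul_comm, ih, mul_one]
    rcases hval _ _ h with h1 | h1 <;> simp [h1]

end WalkSign

namespace SBalanced

variable {G : SimpleGraph V} {sg : V → V → ℤ} (hbal : SBalanced G sg)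
  (hsym : ∀ a b, sg a b = sg b a) (hval : ∀ a b, G.Adj a b → sg a b = 1 ∨ sg a b = -1)
include hbal hsym hval

theorem walkSign_closed_eq_one {u : V} (c : G.Walk u u) : walkSign sg c = 1 := by
  induction hn : c.length using Nat.strong_induction_on generalizing u with
  | _ n ih =>
  cases c with
  | nil => rfl
  | @cons _ v _ h p =>
    by_cases hp : p.IsPath
    · by_cases he : s(u, v) ∈ p.edges
      · rw [hp.eq_adj_toWalk_of_mem_edges (Sym2.eq_swap ▸ he)]
        rcases hval u v h with h1 | h1 <;> simp [hsym v u, h1]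
      · exact hbal _ ((cons_isCycle_iff p h).mpr ⟨hp, he⟩)
    · obtain ⟨w, p₁, c, p₂, hc, rfl⟩ := p.exists_eq_append_closed_of_not_isPath hp
      have hc_pos : 0 < c.length := not_nil_iff_lt_length.mp hc
      have hlt₁ : (cons h (p₁.append p₂)).length < n := by
        subst hn; simp only [length_cons, length_append]; omega
      have hlt₂ : c.length < n := by
        subst hn; simp only [length_cons, length_append]; omega
      have hsplit : walkSign sg (cons h (p₁.append (c.append p₂)))
          = walkSign sg (cons h (p₁.append p₂)) * walkSign sg c := by
        simp only [walkSign_cons, walkSign_append]; ring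
      rw [hsplit, ih _ hlt₁ _ rfl, ih _ hlt₂ _ rfl, one_mul]

theorem walkSign_eq {u v : V} (p q : G.Walk u v) : walkSign sg p = walkSign sg q := by
  have hpq := hbal.walkSign_closed_eq_one hsym hval (p.append q.reverse)
  rw [walkSign_append, walkSign_reverse hsym] at hpq
  calc walkSign sg p = walkSign sg p * (walkSign sg q * walkSign sg q) := by
        rw [walkSign_mul_self hval, mul_one]
    _ = walkSign sg q := by rw [← mul_assoc, hpq, one_mul]

theorem sigmaMax_eq_walkSign {u v : V} (p : G.Walk u v) : sigmaMax G sg u v = walkSign sg p := by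
  obtain ⟨q, hq⟩ := p.reachable.exists_walk_length_eq_dist
  have hshortest : (∃ r : G.Walk u v, r.length = G.dist u v ∧ walkSign sg r = 1) ↔
      walkSign sg p = 1 :=
    ⟨fun ⟨r, _, hr⟩ => hbal.walkSign_eq hsym hval p r ▸ hr,
      fun h => ⟨q, hq, hbal.walkSign_eq hsym hval q p ▸ h⟩⟩
  unfold sigmaMax
  rw [hshortest]
  split_ifs with h
  · exact h.symm
  · exact ((mul_self_eq_one_iff.mp (walkSign_mul_self hval p)).resolve_left h).symm

theorem sigmaMax_mul (hconn : G.Connected) (a b c : V) :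
    sigmaMax G sg a b * sigmaMax G sg b c = sigmaMax G sg a c := by
  obtain ⟨p⟩ := hconn.preconnected a b
  obtain ⟨q⟩ := hconn.preconnected b c
  rw [hbal.sigmaMax_eq_walkSign hsym hval p, hbal.sigmaMax_eq_walkSign hsym hval q,
    hbal.sigmaMax_eq_walkSign hsym hval (p.append q), walkSign_append]

theorem walkSign_sigmaMax (hconn : G.Connected) {H : SimpleGraph V} {u v : V} (P : H.Walk u v) :
    walkSign (sigmaMax G sg) P = sigmaMax G sg u v := by
  induction P with
  | nil => rw [hbal.sigmaMax_eq_walkSign hsym hval (nil : G.Walk _ _), walkSign_nil, walkSign_nil]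
  | cons h P ih => rw [walkSign_cons, ih, hbal.sigmaMax_mul hsym hval hconn]

end SBalanced

theorem balanced_implies_power_compatible_general {V : Type*} (G : SimpleGraph V) (sg : V → V → ℤ)
    (hconn : G.Connected) (hsym : ∀ u v, sg u v = sg v u)
    (hval : ∀ u v, G.Adj u v → sg u v = 1 ∨ sg u v = -1)
    (hbal : SBalanced G sg) (n : ℕ) :
    ∀ u v : V, pairCompatible (powerGraph G n) (sigmaMax G sg) u v := by
  intro u v p q _ _
  rw [hbal.walkSign_sigmaMax hsym hval hconn p, hbal.walkSign_sigmaMax hsym hval hconn q]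

theorem balanced_implies_power_compatible {V : Type*} [Fintype V] (G : SimpleGraph V) (sg : V → V → ℤ)
    (hconn : G.Connected) (hsym : ∀ u v, sg u v = sg v u)
    (hval : ∀ u v, G.Adj u v → sg u v = 1 ∨ sg u v = -1)
    (h2 : TwoConnected G) (hbal : SBalanced G sg) (n : ℕ) (hn : 1 ≤ n) :
    ∀ u v : V, pairCompatible (powerGraph G n) (sigmaMax G sg) u v :=
  balanced_implies_power_compatible_general G sg hconn hsym hval hbal n
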